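/- The Buffer Sufficiency Problem with receive-side buffers (BSP_r) is in coNP: if a communication graph G with token assignment B admits a deadlocking colouring sequence, then there is such a sequence of length at most 2|V|, which serves as a polynomial-size certificate of insufficiency. -/

import Mathlib

/-! Formal framework: communication graphs and the red/yellow/green colouring game
(Brodsky–Pedersen–Wagner, "On the Complexity of Buffer Allocation in Message Passing Systems"),
with receive-side token pools. -/

inductive Colour : Type
  | red | yellow | green
deriving DecidableEq

/-- A communication graph: vertices are partitioned into start/send/receive/end vertices,
`pred u v` means `u` is the component predecessor of `v` (a process arc `u → v`),
`matched u v` is a communication arc from send `u` to its matching receive `v`,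
`comp v` is the index of the process component of `v`, and `pos v` is the position
of `v` within its component chain. -/
structure CommGraph (V : Type) where
  isStart : V → Prop
  isSend : V → Prop
  isRecv : V → Prop
  isEnd : V → Prop
  pred : V → V → Prop
  matched : V → V → Prop
  comp : V → ℕ
  pos : V → ℕ

namespace CommGraph

variable {V : Type}

/-- An arc of the communication graph (process arc or communication arc). -/
def GArc (G : CommGraph V) (u v : V) : Prop := G.pred u v ∨ G.matched u v

/-- Well-formedness of a communication graph: the vertex kinds partition `V`,
components are chains (unique predecessors, positions increase along process arcs),
communication arcs go from sends to receives in different components and form a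
partial matching, and the graph is acyclic (arcs admit no infinite descent). -/
structure WF (G : CommGraph V) : Prop where
  kinds : ∀ v, G.isStart v ∨ G.isSend v ∨ G.isRecv v ∨ G.isEnd v
  start_not_send : ∀ v, G.isStart v → ¬ G.isSend v
  start_not_recv : ∀ v, G.isStart v → ¬ G.isRecv v
  start_not_end : ∀ v, G.isStart v → ¬ G.isEnd v
  send_not_recv : ∀ v, G.isSend v → ¬ G.isRecv v
  send_not_end : ∀ v, G.isSend v → ¬ G.isEnd v
  recv_not_end : ∀ v, G.isRecv v → ¬ G.isEnd v
  pred_unique : ∀ {u u' v}, G.pred u v → G.pred u' v → u = u'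
  pred_comp : ∀ {u v}, G.pred u v → G.comp u = G.comp v
  pred_pos : ∀ {u v}, G.pred u v → G.pos v = G.pos u + 1
  start_no_pred : ∀ {u v}, G.pred u v → ¬ G.isStart v
  has_pred : ∀ v, ¬ G.isStart v → ∃ u, G.pred u v
  matched_send : ∀ {u v}, G.matched u v → G.isSend u
  matched_recv : ∀ {u v}, G.matched u v → G.isRecv v
  matched_comp : ∀ {u v}, G.matched u v → G.comp u ≠ G.comp v
  matched_unique_left : ∀ {u u' v}, G.matched u v → G.matched u' v → u = u'
  matched_unique_right : ∀ {u v v'}, G.matched u v → G.matched u v' → v = v'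
  send_has_match : ∀ v, G.isSend v → ∃ w, G.matched v w
  recv_has_match : ∀ v, G.isRecv v → ∃ w, G.matched w v
  dag : WellFounded fun u v => G.GArc u v

end CommGraph

/-- A state of the colouring game: the colouring, which receive vertices currently
hold a token on their incident communication arc, and the number of available
tokens in each (per-process, receive-side) pool. -/
structure St (V : Type) where
  col : V → Colour
  tok : V → Bool
  pool : ℕ → ℕ

/-- The names of the colouring rules. -/
inductive Rule : Type
  | sendYel | recvYel | recvYelTok | sendGrn | recvGrn | endYel | endGrn
deriving DecidableEq

variable {V : Type}

/-- One move of the colouring game (receive-side buffering: the token used by the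
buffered-receive rule `recvYelTok` comes from the pool of the receiving component,
and is returned when the receive turns green). -/
inductive Step [DecidableEq V] (G : CommGraph V) : Rule → St V → St V → Prop
  | sendYel {s : St V} {v u : V} :
      G.isSend v → s.col v = .red → G.pred u v → s.col u = .green →
      Step G .sendYel s ⟨Function.update s.col v .yellow, s.tok, s.pool⟩
  | recvYel {s : St V} {v u w : V} :
      G.isRecv v → s.col v = .red → G.matched w v → s.col w = .yellow →
      G.pred u v → s.col u = .green →
      Step G .recvYel s ⟨Function.update s.col v .yellow, s.tok, s.pool⟩
  | recvYelTok {s : St V} {v w : V} :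
      G.isRecv v → s.col v = .red → G.matched w v → s.col w = .yellow →
      0 < s.pool (G.comp v) →
      Step G .recvYelTok s ⟨Function.update s.col v .yellow,
        Function.update s.tok v true,
        Function.update s.pool (G.comp v) (s.pool (G.comp v) - 1)⟩
  | sendGrn {s : St V} {v r : V} :
      G.isSend v → s.col v = .yellow → G.matched v r → s.col r = .yellow →
      Step G .sendGrn s ⟨Function.update s.col v .green, s.tok, s.pool⟩
  | recvGrn {s : St V} {v u w : V} :
      G.isRecv v → s.col v = .yellow → G.pred u v → s.col u = .green →
      G.matched w v → s.col w = .green →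
      Step G .recvGrn s ⟨Function.update s.col v .green,
        Function.update s.tok v false,
        if s.tok v then
          Function.update s.pool (G.comp v) (s.pool (G.comp v) + 1)
        else s.pool⟩
  | endYel {s : St V} {v u : V} :
      G.isEnd v → s.col v = .red → G.pred u v → s.col u = .green →
      Step G .endYel s ⟨Function.update s.col v .yellow, s.tok, s.pool⟩
  | endGrn {s : St V} {v : V} :
      G.isEnd v → s.col v = .yellow →
      Step G .endGrn s ⟨Function.update s.col v .green, s.tok, s.pool⟩

/-- `IsSeq G s l` : the list `l` of (rule, state) pairs is a valid colouring sequence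
starting from state `s`. -/
def IsSeq [DecidableEq V] (G : CommGraph V) : St V → List (Rule × St V) → Prop
  | _, [] => True
  | s, p :: l => Step G p.1 s p.2 ∧ IsSeq G p.2 l

/-- The list of states visited by a colouring sequence. -/
def states (s0 : St V) (l : List (Rule × St V)) : List (St V) :=
  s0 :: l.map Prod.snd

/-- The final state of a colouring sequence. -/
def finalSt (s0 : St V) (l : List (Rule × St V)) : St V :=
  (states s0 l).getLast (by simp [states])

open Classical in
/-- The initial state: start vertices green, all others red, no tokens placed,
token pools given by the token assignment `B` (pool of component `i` holds `B i`). -/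
noncomputable def init (G : CommGraph V) (B : ℕ → ℕ) : St V :=
  ⟨fun v => if G.isStart v then Colour.green else Colour.red, fun _ => false, B⟩

/-- A state from which no colouring rule applies. -/
def MaximalFrom [DecidableEq V] (G : CommGraph V) (s : St V) : Prop :=
  ∀ ρ t, ¬ Step G ρ s t

/-- A state is complete when every vertex is green. -/
def Completes (s : St V) : Prop := ∀ v, s.col v = Colour.green

/-- A deadlocking colouring sequence from `s0`: a maximal sequence whose final
colouring has a non-green vertex. -/
def Deadlocks [DecidableEq V] (G : CommGraph V) (s0 : St V) (l : List (Rule × St V)) : Prop :=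
  IsSeq G s0 l ∧ MaximalFrom G (finalSt s0 l) ∧ ¬ Completes (finalSt s0 l)

/-- The system is safe (deadlock free) under token assignment `B`:
every maximal colouring sequence completes. -/
def DeadlockFree [DecidableEq V] (G : CommGraph V) (B : ℕ → ℕ) : Prop :=
  ∀ l, IsSeq G (init G B) l → MaximalFrom G (finalSt (init G B) l) →
    Completes (finalSt (init G B) l)

/-- A state blocks: some yellow send has a matching red receive to which the
buffered-receive rule cannot be applied (no token available). -/
def Blocked (G : CommGraph V) (s : St V) : Prop :=
  ∃ v r, G.matched v r ∧ s.col v = Colour.yellow ∧ s.col r = Colour.red ∧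
    s.pool (G.comp r) = 0

/-- The graph is block free under token assignment `B`: no colouring sequence blocks. -/
def BlockFree [DecidableEq V] (G : CommGraph V) (B : ℕ → ℕ) : Prop :=
  ∀ l, IsSeq G (init G B) l → ¬ Blocked G (finalSt (init G B) l)

/-! Every rule of the colouring game advances one vertex one colour along red → yellow → green.
Ranking the colours 0, 1, 2, the total rank of a colouring therefore grows by exactly one per
move and never exceeds `2|V|`, so every colouring sequence — in particular every deadlocking
one — already has length at most `2|V|`. -/

def Colour.rank : Colour → ℕ
  | .red => 0
  | .yellow => 1
  | .green => 2

lemma Colour.rank_le_two (c : Colour) : c.rank ≤ 2 := by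
  cases c <;> decide

lemma finalSt_cons (s : St V) (p : Rule × St V) (l : List (Rule × St V)) :
    finalSt s (p :: l) = finalSt p.2 l := by
  simp [finalSt, states, List.getLast_cons]

section TotalRank

variable [Fintype V]

def totalRank (f : V → Colour) : ℕ := ∑ v, (f v).rank

lemma totalRank_le_two_mul_card (f : V → Colour) : totalRank f ≤ 2 * Fintype.card V :=
  calc totalRank f ≤ ∑ _v : V, 2 := Finset.sum_le_sum fun v _ => (f v).rank_le_two
    _ = 2 * Fintype.card V := by simp [mul_comm]

lemma totalRank_update [DecidableEq V] (f : V → Colour) (v : V) (c : Colour) :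
    totalRank (Function.update f v c) + (f v).rank = totalRank f + c.rank := by
  have split_at_v : ∀ g : V → ℕ, ∑ x, g x = g v + ∑ x ∈ Finset.univ.erase v, g x :=
    fun g => (Finset.add_sum_erase _ g (Finset.mem_univ v)).symm
  have rest : ∑ x ∈ Finset.univ.erase v, (Function.update f v c x).rank
      = ∑ x ∈ Finset.univ.erase v, (f x).rank :=
    Finset.sum_congr rfl fun x hx => by rw [Function.update_of_ne (Finset.ne_of_mem_erase hx)]
  rw [totalRank, totalRank, split_at_v, split_at_v fun x => (f x).rank, rest, Function.update_self]
  omega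

lemma totalRank_update_of_rank_eq_succ [DecidableEq V] {f : V → Colour} {v : V} {c : Colour}
    (hc : c.rank = (f v).rank + 1) : totalRank (Function.update f v c) = totalRank f + 1 := by
  have := totalRank_update f v c
  omega

variable [DecidableEq V] {G : CommGraph V}

lemma Step.totalRank_eq {ρ : Rule} {s t : St V} (h : Step G ρ s t) :
    totalRank t.col = totalRank s.col + 1 := by
  cases h <;> exact totalRank_update_of_rank_eq_succ (by simp [*, Colour.rank])

lemma IsSeq.totalRank_finalSt {l : List (Rule × St V)} {s : St V} (hl : IsSeq G s l) :
    totalRank (finalSt s l).col = totalRank s.col + l.length := by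
  induction l generalizing s with
  | nil => simp [finalSt, states]
  | cons p l ih =>
    obtain ⟨hstep, hrest⟩ := hl
    rw [finalSt_cons, ih hrest, hstep.totalRank_eq, List.length_cons]
    omega

lemma IsSeq.length_le {l : List (Rule × St V)} {s : St V} (hl : IsSeq G s l) :
    l.length ≤ 2 * Fintype.card V := by
  have := hl.totalRank_finalSt
  have := totalRank_le_two_mul_card (finalSt s l).col
  omega

end TotalRank

theorem bsp_r_short_deadlock_certificate_general {V : Type} [DecidableEq V] [Fintype V]
    (G : CommGraph V) (B : ℕ → ℕ)
    (h : ∃ l, Deadlocks G (init G B) l) :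
    ∃ l, Deadlocks G (init G B) l ∧ l.length ≤ 2 * Fintype.card V := by
  obtain ⟨l, hl⟩ := h
  exact ⟨l, hl, hl.1.length_le⟩

/-- **BSP_r is in coNP.** If a communication graph `G` with token assignment `B`
admits a deadlocking colouring sequence, then it admits one of length at most
`2|V|` (each vertex changes colour at most twice), a polynomial-size certificate
of insufficiency. -/
theorem bsp_r_short_deadlock_certificate {V : Type} [DecidableEq V] [Fintype V]
    (G : CommGraph V) (hwf : G.WF) (B : ℕ → ℕ)
    (h : ∃ l, Deadlocks G (init G B) l) :
    ∃ l, Deadlocks G (init G B) l ∧ l.length ≤ 2 * Fintype.card V :=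
  bsp_r_short_deadlock_certificate_general G B h
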